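/- arXiv:2603.21259 — 2 statements merged into one kernel-verified Lean document; each statement's English description precedes it below -/
import Mathlib

section
/- Suppose n, m, k are non-negative integers, 2 ≤ b ≤ 10, d is the number of base-b digits of F_k (with k ≥ 1 so F_k ≥ 1), and L_n = L_m·b^d + F_k. Then k + m - 5 < n < k + m + 7·log b. -/
/-!
Binet's formulas give `L_n = φ ^ n + ψ ^ n` with `|ψ ^ n| ≤ 1` and `φ ^ (k - 2) ≤ F_k ≤ φ ^ (k - 1)`,
while the digit count satisfies `F_k < b ^ d ≤ b F_k`. Hence `φ ^ n` is squeezed between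
`L_m F_k ≥ φ ^ (m + k - 3)` and `3 b φ ^ (m + k - 1)`, so `n > m + k - 3`, and taking logarithms
`n ≤ m + k - 1 + log (3 b) / log φ < m + k + 7 log b`, because `7 log φ ≥ 3` and `3 < 4 φ ≤ b ^ 2 φ`.
-/

open Real goldenRatio

def lucas : ℕ → ℕ
  | 0 => 2
  | 1 => 1
  | n + 2 => lucas (n + 1) + lucas n

theorem lucas_pos : ∀ n : ℕ, 0 < lucas n
  | 0 => by decide
  | 1 => by decide
  | n + 2 => Nat.add_pos_right _ (lucas_pos n)

theorem coe_lucas_eq : ∀ n : ℕ, (lucas n : ℝ) = φ ^ n + ψ ^ n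
  | 0 => by norm_num [lucas]
  | 1 => by simp [lucas, goldenRatio_add_goldenConj]
  | n + 2 => by
    rw [lucas, Nat.cast_add, coe_lucas_eq (n + 1), coe_lucas_eq n]
    linear_combination -(φ ^ n * goldenRatio_sq + ψ ^ n * goldenConj_sq)

theorem abs_goldenConj_pow_le_one (n : ℕ) : |ψ ^ n| ≤ 1 := by
  rw [abs_pow]
  exact pow_le_one₀ (abs_nonneg _) (abs_le.2 ⟨neg_one_lt_goldenConj.le, goldenConj_neg.le.trans zero_le_one⟩)

theorem abs_lucas_sub_goldenRatio_pow_le_one (n : ℕ) : |(lucas n : ℝ) - φ ^ n| ≤ 1 := by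
  simpa [coe_lucas_eq] using abs_goldenConj_pow_le_one n

theorem goldenRatio_pow_le_mul_lucas : ∀ n : ℕ, φ ^ n ≤ φ * lucas n
  | 0 => by norm_num [lucas]
  | 1 => by simp [lucas]
  | n + 2 => by
    rw [lucas, Nat.cast_add]
    linarith [goldenRatio_pow_sub_goldenRatio_pow n, goldenRatio_pow_le_mul_lucas n,
      goldenRatio_pow_le_mul_lucas (n + 1)]

theorem goldenRatio_mul_fib_le_pow (n : ℕ) : φ * Nat.fib n ≤ φ ^ n := by
  cases n with
  | zero => simp
  | succ n => linarith [goldenRatio_mul_fib_succ_add_fib n, (Nat.fib n).cast_nonneg (α := ℝ)]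

theorem goldenRatio_pow_le_sq_mul_fib {n : ℕ} (hn : n ≠ 0) : φ ^ n ≤ φ ^ 2 * Nat.fib n := by
  obtain ⟨n, rfl⟩ := Nat.exists_eq_succ_of_ne_zero hn
  have hmono : (Nat.fib n : ℝ) ≤ Nat.fib (n + 1) := by exact_mod_cast Nat.fib_le_fib_succ
  rw [← goldenRatio_mul_fib_succ_add_fib, goldenRatio_sq]
  linarith

theorem three_le_seven_mul_log_goldenRatio : 3 ≤ 7 * log φ := by
  have hcube : (4 : ℝ) ≤ φ ^ 3 := by
    have : (2 : ℝ) ≤ √5 := Real.le_sqrt_of_sq_le (by norm_num)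
    nlinarith [goldenRatio_sq, one_lt_goldenRatio]
  have hlog : 2 * log 2 ≤ 3 * log φ := by
    have := log_le_log (by norm_num) hcube
    rwa [log_pow, show (4 : ℝ) = 2 ^ 2 by norm_num, log_pow] at this
  linarith [log_two_gt_d9]

section concatenation

variable {n m k c : ℕ}

theorem add_lt_add_three_of_lucas_eq (hk : k ≠ 0) (hc : Nat.fib k < c)
    (heq : lucas n = lucas m * c + Nat.fib k) : m + k < n + 3 := by
  have hnat : lucas m * Nat.fib k + 2 ≤ lucas n := by
    have := Nat.mul_le_mul_left (lucas m) hc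
    nlinarith [lucas_pos m, Nat.fib_pos.2 (Nat.pos_of_ne_zero hk)]
  have hreal : (lucas m : ℝ) * Nat.fib k + 2 ≤ lucas n := by exact_mod_cast hnat
  have hn : (lucas m : ℝ) * Nat.fib k < φ ^ n := by
    linarith [(abs_le.1 (abs_lucas_sub_goldenRatio_pow_le_one n)).2]
  refine (pow_lt_pow_iff_right₀ one_lt_goldenRatio).1 ?_
  calc φ ^ (m + k) = φ ^ m * φ ^ k := pow_add _ _ _
    _ ≤ (φ * lucas m) * (φ ^ 2 * Nat.fib k) :=
      mul_le_mul (goldenRatio_pow_le_mul_lucas m) (goldenRatio_pow_le_sq_mul_fib hk)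
        (by positivity) (by positivity)
    _ = φ ^ 3 * (lucas m * Nat.fib k) := by ring
    _ < φ ^ 3 * φ ^ n := mul_lt_mul_of_pos_left hn (by positivity)
    _ = φ ^ (n + 3) := by ring

theorem goldenRatio_pow_succ_le_of_lucas_eq {b : ℕ} (hc : Nat.fib k < c) (hcb : c ≤ b * Nat.fib k)
    (heq : lucas n = lucas m * c + Nat.fib k) : φ ^ (n + 1) ≤ 3 * b * φ ^ (m + k) := by
  have hn : φ ^ n ≤ (lucas m + 1) * c := by
    have hnat : lucas n + 1 ≤ (lucas m + 1) * c := by rw [heq]; nlinarith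
    have : (lucas n : ℝ) + 1 ≤ (lucas m + 1) * c := by exact_mod_cast hnat
    linarith [(abs_le.1 (abs_lucas_sub_goldenRatio_pow_le_one n)).1]
  have hm : (lucas m : ℝ) + 1 ≤ 3 * φ ^ m := by
    linarith [(abs_le.1 (abs_lucas_sub_goldenRatio_pow_le_one m)).2,
      one_le_pow₀ (M₀ := ℝ) (n := m) one_lt_goldenRatio.le]
  have hcb' : φ * c ≤ b * φ ^ k := by
    have : (c : ℝ) ≤ b * Nat.fib k := by exact_mod_cast hcb
    nlinarith [goldenRatio_mul_fib_le_pow k, goldenRatio_pos, (b.cast_nonneg : (0 : ℝ) ≤ b)]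
  calc φ ^ (n + 1) = φ * φ ^ n := pow_succ' _ _
    _ ≤ φ * ((lucas m + 1) * c) := mul_le_mul_of_nonneg_left hn goldenRatio_pos.le
    _ = (lucas m + 1) * (φ * c) := by ring
    _ ≤ (3 * φ ^ m) * (b * φ ^ k) := mul_le_mul hm hcb' (by positivity) (by positivity)
    _ = 3 * b * φ ^ (m + k) := by ring

end concatenation

theorem natCast_lt_add_seven_mul_log_of_goldenRatio_pow_le {n j : ℕ} {x : ℝ} (hx : 2 ≤ x)
    (h : φ ^ (n + 1) ≤ 3 * x * φ ^ j) : (n : ℝ) < j + 7 * log x := by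
  have hlogx : log 2 ≤ log x := log_le_log (by norm_num) hx
  have hlogφ : 0 < log φ := log_pos one_lt_goldenRatio
  have hlog3 : log 3 < 2 * log x + log φ := by
    have : (3 : ℝ) < x ^ 2 * φ := by nlinarith [one_lt_goldenRatio]
    have := log_lt_log (by norm_num) this
    rwa [log_mul (by positivity) goldenRatio_ne_zero, log_pow, Nat.cast_ofNat] at this
  have htaken : (n + 1) * log φ ≤ log 3 + log x + j * log φ := by
    have := log_le_log (by positivity) h
    rwa [log_pow, log_mul (by positivity) (by positivity), log_mul (by norm_num) (by positivity),
      log_pow, Nat.cast_succ] at this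
  have := three_le_seven_mul_log_goldenRatio
  refine lt_of_mul_lt_mul_right ?_ hlogφ.le
  nlinarith [log_two_gt_d9]

theorem concat_lucas_fib_n_bounds_general (n m k b d : ℕ) (hb : 2 ≤ b)
    (hk : 1 ≤ k) (hd : d = Nat.log b (Nat.fib k) + 1)
    (heq : lucas n = lucas m * b ^ d + Nat.fib k) :
    (k : ℝ) + m - 5 < n ∧ (n : ℝ) < k + m + 7 * Real.log b := by
  have hfib : Nat.fib k ≠ 0 := (Nat.fib_pos.2 hk).ne'
  have hlt : Nat.fib k < b ^ d := hd ▸ Nat.lt_pow_succ_log_self hb _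
  have hle : b ^ d ≤ b * Nat.fib k := by
    rw [hd, pow_succ']
    exact Nat.mul_le_mul_left b (Nat.pow_log_le_self b hfib)
  constructor
  · have : ((m + k : ℕ) : ℝ) < (n + 3 : ℕ) :=
      Nat.cast_lt.2 (add_lt_add_three_of_lucas_eq (by omega) hlt heq)
    push_cast at this
    linarith
  · have := natCast_lt_add_seven_mul_log_of_goldenRatio_pow_le (x := b) (by exact_mod_cast hb)
      (goldenRatio_pow_succ_le_of_lucas_eq hlt hle heq)
    push_cast at this
    linarith

theorem concat_lucas_fib_n_bounds (n m k b d : ℕ) (hb : 2 ≤ b) (hb' : b ≤ 10)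
    (hk : 1 ≤ k) (hd : d = Nat.log b (Nat.fib k) + 1)
    (heq : lucas n = lucas m * b ^ d + Nat.fib k) :
    (k : ℝ) + m - 5 < n ∧ (n : ℝ) < k + m + 7 * Real.log b :=
  concat_lucas_fib_n_bounds_general n m k b d hb hk hd heq
end

section
/- Suppose n, m, k are non-negative integers, 2 ≤ b ≤ 10, d is the number of base-b digits of F_k (k ≥ 1), and L_n = L_m·b^d + F_k. Then d < n - m + 2. -/
lemma lucas_pos_s7 : ∀ a, 1 ≤ lucas a
  | 0 => by simp [lucas]
  | 1 => by simp [lucas]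
  | a + 2 => by
      have h1 := lucas_pos_s7 a
      have h2 := lucas_pos_s7 (a + 1)
      simp only [lucas]; omega

lemma lucas_succ_le : ∀ a, 1 ≤ a → lucas a ≤ lucas (a + 1)
  | 0, h => by omega
  | 1, _ => by simp [lucas]
  | a + 2, _ => by
      have := lucas_pos_s7 a
      show lucas (a + 2) ≤ lucas (a + 3)
      simp only [lucas]; omega

lemma lucas_mono (a : ℕ) (ha : 1 ≤ a) : ∀ t, lucas a ≤ lucas (a + t)
  | 0 => le_refl _
  | t + 1 => le_trans (lucas_mono a ha t) (by
      have := lucas_succ_le (a + t) (by omega)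
      simpa [Nat.add_assoc] using this)

lemma lucas_prev_le : ∀ a, lucas a ≤ 2 * lucas (a + 1)
  | 0 => by simp [lucas]
  | a + 1 => by
      have := lucas_succ_le (a + 1) (by omega)
      have := lucas_pos_s7 (a + 1)
      omega

lemma lucas_succ_le_four (a : ℕ) : lucas (a + 1) ≤ 4 * lucas a := by
  cases a with
  | zero => simp [lucas]
  | succ c =>
      have h1 := lucas_prev_le c
      have h2 := lucas_pos_s7 (c + 1)
      show lucas (c + 2) ≤ 4 * lucas (c + 1)
      simp only [lucas]; omega

lemma lucas_upper (a : ℕ) : ∀ t, lucas (a + t) ≤ 2 ^ (t + 1) * lucas a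
  | 0 => by have := lucas_pos_s7 a; simpa using by omega
  | 1 => by
      have := lucas_succ_le_four a
      simpa [pow_succ] using by omega
  | t + 2 => by
      have h1 := lucas_upper a t
      have h2 := lucas_upper a (t + 1)
      have : lucas (a + (t + 2)) = lucas (a + t + 1) + lucas (a + t) := by
        have : a + (t + 2) = (a + t) + 2 := by omega
        rw [this]; simp only [lucas]
      rw [this]
      have e1 : a + (t + 1) = a + t + 1 := by omega
      rw [e1] at h2
      have : (2:ℕ) ^ (t + 2 + 1) = 2 * 2 ^ (t + 1 + 1) := by ring
      rw [this]
      have : (2:ℕ) ^ (t + 1 + 1) = 2 * 2 ^ (t + 1) := by ring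
      nlinarith [pow_pos (by norm_num : (0:ℕ) < 2) (t+1)]

theorem concat_lucas_fib_d_bound (n m k b d : ℕ) (hb : 2 ≤ b) (hb' : b ≤ 10)
    (hk : 1 ≤ k) (hd : d = Nat.log b (Nat.fib k) + 1)
    (heq : lucas n = lucas m * b ^ d + Nat.fib k) :
    (d : ℤ) < (n : ℤ) - m + 2 := by
  have hfib : 1 ≤ Nat.fib k := Nat.fib_pos.mpr (by omega)
  have hd1 : 1 ≤ d := by omega
  have hbd : 2 ≤ b ^ d := le_trans hb (Nat.le_self_pow (by omega) b)
  have hlm := lucas_pos_s7 m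
  have hln := lucas_pos_s7 n
  rcases le_or_gt m n with hmn | hmn
  · obtain ⟨t, rfl⟩ := Nat.exists_eq_add_of_le hmn
    have hub : lucas (m + t) ≤ 2 ^ (t + 1) * lucas m := lucas_upper m t
    have h2b : (2:ℕ) ^ (t + 1) ≤ b ^ (t + 1) := Nat.pow_le_pow_left hb _
    have key : lucas m * b ^ d < lucas m * b ^ (t + 1) := by
      calc lucas m * b ^ d < lucas (m + t) := by omega
        _ ≤ 2 ^ (t + 1) * lucas m := hub
        _ ≤ b ^ (t + 1) * lucas m := Nat.mul_le_mul_right _ h2b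
        _ = lucas m * b ^ (t + 1) := by ring
    have hpow : b ^ d < b ^ (t + 1) := lt_of_mul_lt_mul_left key (Nat.zero_le _)
    have : d < t + 1 := (Nat.pow_lt_pow_iff_right (by omega)).mp hpow
    push_cast
    omega
  · -- n < m: contradiction
    exfalso
    have hle : lucas n ≤ 2 * lucas m := by
      cases n with
      | zero => simpa [lucas] using by omega
      | succ c =>
          have := lucas_mono (c + 1) (by omega) (m - (c + 1))
          rw [Nat.add_sub_cancel' (by omega : c + 1 ≤ m)] at this
          omega
    nlinarith
end
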